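/- arXiv:1705.08492 — 2 statements merged into one kernel-verified Lean document; each statement's English description precedes it below -/
import Mathlib

section
/- E[Z] = E[Y | T = h(X)], i.e., the importance-weighted random variable Z = Σ_{t=0}^K (1/p_t) · Y · 1{h(X)=t} · 1{T=t} has expectation equal to the expected response when treatment is assigned by the policy h. -/
/-!
Each summand of `Z` is `Y / p t` restricted to the event `{h(X) = t, T = t}`. Independence of
`X` and `T` factors the probability of that event as `P(h(X) = t) ⬝ p t`, so the factor `1 / p t`
turns its integral into the conditional mean of `Y` on the event times `P(h(X) = t)`. When
`P(h(X) = t) = 0` both sides vanish.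
-/

open MeasureTheory ProbabilityTheory

lemma ite_mul_ite_eq_indicator {Ω α β : Type*} [DecidableEq α] [DecidableEq β]
    (f : Ω → α) (g : Ω → β) (a : α) (b : β) (c : ℝ) (Y : Ω → ℝ) :
    (fun ω => c * Y ω * (if f ω = a then (1 : ℝ) else 0) * (if g ω = b then (1 : ℝ) else 0))
      = {ω | f ω = a ∧ g ω = b}.indicator (fun ω => c * Y ω) := by
  funext ω
  by_cases hf : f ω = a <;> by_cases hg : g ω = b <;> simp [hf, hg]

lemma one_div_mul_eq_div_mul_mul_of_imp {K : Type*} [Field K] {x a q : K}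
    (hx : a = 0 → x = 0) : 1 / q * x = x / (a * q) * a := by
  by_cases ha : a = 0
  · simp [ha, hx ha]
  · rw [div_mul_eq_mul_div x, mul_comm x a, mul_div_mul_left x q ha, one_div_mul_eq_div]

theorem stmt_0_general {Ω 𝕏 : Type*} [MeasurableSpace Ω] [MeasurableSpace 𝕏]
    (P : Measure Ω) [IsProbabilityMeasure P] (K : ℕ)
    (X : Ω → 𝕏) (T : Ω → Fin (K + 1)) (Y : Ω → ℝ)
    (hX : Measurable X) (hT : Measurable T) (hY : Integrable Y P)
    (hInd : IndepFun X T P)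
    (p : Fin (K + 1) → ℝ)
    (hpt : ∀ t, (P {ω | T ω = t}).toReal = p t)
    (h : 𝕏 → Fin (K + 1)) (hh : Measurable h) :
    ∫ ω, (∑ t : Fin (K + 1), (1 / p t) * Y ω *
        (if h (X ω) = t then (1 : ℝ) else 0) *
        (if T ω = t then (1 : ℝ) else 0)) ∂P
      = ∑ t : Fin (K + 1),
          ((∫ ω in {ω | h (X ω) = t ∧ T ω = t}, Y ω ∂P) /
              (P {ω | h (X ω) = t ∧ T ω = t}).toReal) *
            (P {ω | h (X ω) = t}).toReal := by
  have hS : ∀ t, MeasurableSet {ω | h (X ω) = t ∧ T ω = t} := fun t =>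
    (hh.comp hX (measurableSet_singleton t)).inter (hT (measurableSet_singleton t))
  rw [integral_finsetSum _ fun t _ => by
    rw [ite_mul_ite_eq_indicator]; exact (hY.const_mul _).indicator (hS t)]
  refine Finset.sum_congr rfl fun t _ => ?_
  have hprod : P {ω | h (X ω) = t ∧ T ω = t} = P {ω | h (X ω) = t} * P {ω | T ω = t} :=
    (hInd.comp hh measurable_id).measure_inter_preimage_eq_mul _ _
      (measurableSet_singleton t) (measurableSet_singleton t)
  rw [ite_mul_ite_eq_indicator, integral_indicator (hS t), integral_const_mul, hprod,
    ENNReal.toReal_mul, hpt]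
  refine one_div_mul_eq_div_mul_mul_of_imp fun hA_real => setIntegral_measure_zero _ ?_
  have hA : P {ω | h (X ω) = t} = 0 :=
    ((ENNReal.toReal_eq_zero_iff _).mp hA_real).resolve_right (measure_ne_top P _)
  exact measure_mono_null (fun ω hω => hω.1) hA

/-- **Lemma 1 (unbiasedness of the importance-weighted response).**
In a randomized experiment where the treatment `T` (with values in `{0,…,K}`,
`P(T = t) = p t > 0`) is independent of the features `X`, for any measurable
policy `h`, the random variable
`Z = ∑ t, (1/p t) ⬝ Y ⬝ 1{h(X) = t} ⬝ 1{T = t}`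
satisfies `E[Z] = E[Y | T = h(X)]`, where the right-hand side is
`∑ t, E[Y | h(X) = t, T = t] ⬝ P(h(X) = t)`. -/
theorem stmt_0 {Ω 𝕏 : Type*} [MeasurableSpace Ω] [MeasurableSpace 𝕏]
    (P : Measure Ω) [IsProbabilityMeasure P] (K : ℕ)
    (X : Ω → 𝕏) (T : Ω → Fin (K + 1)) (Y : Ω → ℝ)
    (hX : Measurable X) (hT : Measurable T) (hY : Integrable Y P)
    (hInd : IndepFun X T P)
    (p : Fin (K + 1) → ℝ) (hp : ∀ t, 0 < p t)
    (hpt : ∀ t, (P {ω | T ω = t}).toReal = p t)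
    (h : 𝕏 → Fin (K + 1)) (hh : Measurable h) :
    ∫ ω, (∑ t : Fin (K + 1), (1 / p t) * Y ω *
        (if h (X ω) = t then (1 : ℝ) else 0) *
        (if T ω = t then (1 : ℝ) else 0)) ∂P
      = ∑ t : Fin (K + 1),
          ((∫ ω in {ω | h (X ω) = t ∧ T ω = t}, Y ω ∂P) /
              (P {ω | h (X ω) = t ∧ T ω = t}).toReal) *
            (P {ω | h (X ω) = t}).toReal :=
  stmt_0_general P K X T Y hX hT hY hInd p hpt h hh
end

section
/- If the response has the same distribution under all treatments within a region φ (i.e., E[Y | X∈φ_A, T=t] does not depend on t for every measurable φ_A ⊆ φ with positive probability), then for every policy h, the expected response restricted to φ equals E[Y | X∈φ, T=0]; i.e., no policy can outperform the control on φ. -/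
/-!
By independence of `X` and `T`, `P(X ∈ A, T = t) = P(X ∈ A) P(T = t)`. On the stratum
`Aₜ = φ ∩ h⁻¹{t}` the hypothesis replaces `E[Y | X ∈ Aₜ, T = t]` by `E[Y | X ∈ Aₜ, T = 0]`, so the
`t`-th term of the policy value becomes `(∫_{X ∈ Aₜ, T = 0} Y) / (P(T = 0) P(X ∈ φ))`. The strata
partition `φ`, so these integrals add up to `∫_{X ∈ φ, T = 0} Y`, and independence turns the
denominator back into `P(X ∈ φ, T = 0)`.
-/

open MeasureTheory ProbabilityTheory Set

section
variable {Ω ι : Type*} [MeasurableSpace Ω] [MeasurableSpace ι] [MeasurableSingletonClass ι]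
  {P : Measure Ω} {Y : Ω → ℝ}

lemma sum_setIntegral_inter_preimage_singleton [Fintype ι] {g : Ω → ι} (hg : Measurable g)
    {s : Set Ω} (hs : MeasurableSet s) (hY : IntegrableOn Y s P) :
    ∑ t, ∫ ω in s ∩ g ⁻¹' {t}, Y ω ∂P = ∫ ω in s, Y ω ∂P := by
  rw [← integral_iUnion_fintype (fun t => hs.inter (hg (measurableSet_singleton t)))
    (fun i j hij => (pairwise_disjoint_fiber g hij).mono inf_le_right inf_le_right)
    (fun t => hY.mono_set inter_subset_left), ← inter_iUnion, ← preimage_iUnion,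
    iUnion_of_singleton, preimage_univ, inter_univ]

namespace ProbabilityTheory.IndepFun

variable {𝕏 : Type*} [MeasurableSpace 𝕏] {X : Ω → 𝕏} {T : Ω → ι} {A : Set 𝕏}

lemma measureReal_mem_and_eq (hInd : IndepFun X T P) (hA : MeasurableSet A) (t : ι) :
    P.real {ω | X ω ∈ A ∧ T ω = t} = P.real {ω | X ω ∈ A} * P.real {ω | T ω = t} := by
  simp only [measureReal_def, ← ENNReal.toReal_mul]
  exact congrArg ENNReal.toReal
    (hInd.measure_inter_preimage_eq_mul A {t} hA (measurableSet_singleton t))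

variable [IsFiniteMeasure P]

lemma setIntegral_div_mul_measureReal (hInd : IndepFun X T P) (hA : MeasurableSet A) (t : ι) :
    (∫ ω in {ω | X ω ∈ A ∧ T ω = t}, Y ω ∂P) / P.real {ω | X ω ∈ A ∧ T ω = t}
        * P.real {ω | X ω ∈ A}
      = (∫ ω in {ω | X ω ∈ A ∧ T ω = t}, Y ω ∂P) / P.real {ω | T ω = t} := by
  rw [hInd.measureReal_mem_and_eq hA]
  by_cases hA0 : P.real {ω | X ω ∈ A} = 0
  · have hnull : P {ω | X ω ∈ A ∧ T ω = t} = 0 :=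
      measure_mono_null (fun ω hω => hω.1) ((measureReal_eq_zero_iff).1 hA0)
    simp [Measure.restrict_eq_zero.2 hnull, hA0]
  · field_simp

lemma setIntegral_div_mul_measureReal_of_eq (hInd : IndepFun X T P) (hA : MeasurableSet A)
    {t t₀ : ι}
    (hsame : 0 < P.real {ω | X ω ∈ A} →
      (∫ ω in {ω | X ω ∈ A ∧ T ω = t}, Y ω ∂P) / P.real {ω | X ω ∈ A ∧ T ω = t}
        = (∫ ω in {ω | X ω ∈ A ∧ T ω = t₀}, Y ω ∂P) / P.real {ω | X ω ∈ A ∧ T ω = t₀}) :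
    (∫ ω in {ω | X ω ∈ A ∧ T ω = t}, Y ω ∂P) / P.real {ω | X ω ∈ A ∧ T ω = t}
        * P.real {ω | X ω ∈ A}
      = (∫ ω in {ω | X ω ∈ A ∧ T ω = t₀}, Y ω ∂P) / P.real {ω | T ω = t₀} := by
  rcases (measureReal_nonneg : 0 ≤ P.real {ω | X ω ∈ A}).eq_or_lt with hA0 | hpos
  · have hnull : P {ω | X ω ∈ A ∧ T ω = t₀} = 0 :=
      measure_mono_null (fun ω hω => hω.1) ((measureReal_eq_zero_iff).1 hA0.symm)
    rw [← hA0, mul_zero, Measure.restrict_eq_zero.2 hnull, integral_zero_measure, zero_div]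
  · rw [hsame hpos, hInd.setIntegral_div_mul_measureReal hA]

end ProbabilityTheory.IndepFun

end

theorem stmt_4_general {Ω 𝕏 : Type*} [MeasurableSpace Ω] [MeasurableSpace 𝕏]
    (P : Measure Ω) [IsProbabilityMeasure P] (K : ℕ)
    (X : Ω → 𝕏) (T : Ω → Fin (K + 1)) (Y : Ω → ℝ)
    (hX : Measurable X) (hT : Measurable T) (hY : Integrable Y P)
    (hInd : IndepFun X T P)
    (φ : Set 𝕏) (hφm : MeasurableSet φ)
    -- within φ, the conditional expected response does not depend on the treatment
    (hsame : ∀ A : Set 𝕏, MeasurableSet A → A ⊆ φ → 0 < (P {ω | X ω ∈ A}).toReal →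
      ∀ t : Fin (K + 1),
        (∫ ω in {ω | X ω ∈ A ∧ T ω = t}, Y ω ∂P) /
            (P {ω | X ω ∈ A ∧ T ω = t}).toReal
          = (∫ ω in {ω | X ω ∈ A ∧ T ω = 0}, Y ω ∂P) /
              (P {ω | X ω ∈ A ∧ T ω = 0}).toReal)
    (h : 𝕏 → Fin (K + 1)) (hh : Measurable h) :
    ∑ t : Fin (K + 1),
        ((∫ ω in {ω | X ω ∈ φ ∧ h (X ω) = t ∧ T ω = t}, Y ω ∂P) /
            (P {ω | X ω ∈ φ ∧ h (X ω) = t ∧ T ω = t}).toReal) *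
          ((P {ω | X ω ∈ φ ∧ h (X ω) = t}).toReal / (P {ω | X ω ∈ φ}).toReal)
      = (∫ ω in {ω | X ω ∈ φ ∧ T ω = 0}, Y ω ∂P) /
          (P {ω | X ω ∈ φ ∧ T ω = 0}).toReal := by
  have hterm (t : Fin (K + 1)) :
      (∫ ω in {ω | X ω ∈ φ ∧ h (X ω) = t ∧ T ω = t}, Y ω ∂P) /
            P.real {ω | X ω ∈ φ ∧ h (X ω) = t ∧ T ω = t} *
          (P.real {ω | X ω ∈ φ ∧ h (X ω) = t} / P.real {ω | X ω ∈ φ})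
        = (∫ ω in {ω | X ω ∈ φ ∧ T ω = 0} ∩ (h ∘ X) ⁻¹' {t}, Y ω ∂P) /
            P.real {ω | T ω = 0} / P.real {ω | X ω ∈ φ} := by
    have hA : MeasurableSet (φ ∩ h ⁻¹' {t}) := hφm.inter (hh (measurableSet_singleton t))
    have key := hInd.setIntegral_div_mul_measureReal_of_eq hA
      (hsame _ hA inter_subset_left · t)
    simp only [mem_inter_iff, mem_preimage, mem_singleton_iff, and_assoc] at key
    rw [← mul_div_assoc, key]
    congr 4
    ext ω
    simp only [mem_inter_iff, mem_ofPred_eq, mem_preimage, Function.comp_apply, mem_singleton_iff]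
    tauto
  have hstratum : MeasurableSet {ω | X ω ∈ φ ∧ T ω = 0} :=
    (hX hφm).inter (hT (measurableSet_singleton 0))
  simp only [← measureReal_def, hterm, ← Finset.sum_div, div_div,
    sum_setIntegral_inter_preimage_singleton (hh.comp hX) hstratum hY.integrableOn,
    hInd.measureReal_mem_and_eq hφm, mul_comm]

/-- **No policy can outperform the control on a treatment-insensitive region.**
If, within a region `φ`, the conditional expected response `E[Y | X∈A, T=t]` does
not depend on the treatment `t` (for every measurable `A ⊆ φ` of positive
probability), then for every measurable policy `h`, the expected response on `φ`,
`∑ₜ E[Y | X ∈ φ ∩ h⁻¹{t}, T = t] ⬝ P(h(X)=t | X∈φ)`,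
equals `E[Y | X∈φ, T=0]`.  (Terms with `P(X ∈ φ ∩ h⁻¹{t}) = 0` vanish, since in
that case both the set integral and the conditional probability factor are `0`.) -/
theorem stmt_4 {Ω 𝕏 : Type*} [MeasurableSpace Ω] [MeasurableSpace 𝕏]
    (P : Measure Ω) [IsProbabilityMeasure P] (K : ℕ)
    (X : Ω → 𝕏) (T : Ω → Fin (K + 1)) (Y : Ω → ℝ)
    (hX : Measurable X) (hT : Measurable T) (hY : Integrable Y P)
    (hInd : IndepFun X T P)
    (hp : ∀ t, 0 < (P {ω | T ω = t}).toReal)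
    (φ : Set 𝕏) (hφm : MeasurableSet φ) (hφ : 0 < (P {ω | X ω ∈ φ}).toReal)
    -- within φ, the conditional expected response does not depend on the treatment
    (hsame : ∀ A : Set 𝕏, MeasurableSet A → A ⊆ φ → 0 < (P {ω | X ω ∈ A}).toReal →
      ∀ t : Fin (K + 1),
        (∫ ω in {ω | X ω ∈ A ∧ T ω = t}, Y ω ∂P) /
            (P {ω | X ω ∈ A ∧ T ω = t}).toReal
          = (∫ ω in {ω | X ω ∈ A ∧ T ω = 0}, Y ω ∂P) /
              (P {ω | X ω ∈ A ∧ T ω = 0}).toReal)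
    (h : 𝕏 → Fin (K + 1)) (hh : Measurable h) :
    ∑ t : Fin (K + 1),
        ((∫ ω in {ω | X ω ∈ φ ∧ h (X ω) = t ∧ T ω = t}, Y ω ∂P) /
            (P {ω | X ω ∈ φ ∧ h (X ω) = t ∧ T ω = t}).toReal) *
          ((P {ω | X ω ∈ φ ∧ h (X ω) = t}).toReal / (P {ω | X ω ∈ φ}).toReal)
      = (∫ ω in {ω | X ω ∈ φ ∧ T ω = 0}, Y ω ∂P) /
          (P {ω | X ω ∈ φ ∧ T ω = 0}).toReal :=
  stmt_4_general P K X T Y hX hT hY hInd φ hφm hsame h hh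
end
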